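/- Let k ≥ 1 and n ≥ 1 be integers and let τ = x+iy ∈ ℍ. Then R_{−2k}^k(e(nτ)) = e(nτ) · Σ_{r=0}^k ( (k+r)! / (r!·(k−r)!) ) · n^{k−r} · (4πy)^{−r}. (This is the identity R_{−2k}^k(e(nτ)) = 2 y^{1/2} n^{k+1/2} K_{k+1/2}(2πny) e(nx) written in elementary terms via K_{k+1/2}(x) = (π/2)^{1/2} x^{−k−1/2} e^{−x} Σ_{r=0}^k ((k+r)!/(2^r r! (k−r)!)) x^{k−r}.) -/

import Mathlib

/-! With `u = (4π Im τ)⁻¹` one has `∂u/∂τ = 2πi u²`, `∂e(cτ)/∂τ = 2πi c e(cτ)` and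
`1/(τ - τ̄) = -2πi u`, so `R_w` sends `e(cτ) P(u)` to `e(cτ) Q(u)` with
`Q = c P + u (u P' - w P)`, for every polynomial `P`. Starting from `P = 1`, Pascal's rule shows
that after `m` raisings from weight `w` the coefficient of `u^r` is
`C(m, r) c^(m-r) (1-w-m)(2-w-m)⋯(r-w-m)`; for `w = -2k`, `m = k` this rising factorial is
`(k+r)!/k!`. -/

noncomputable section

open Complex Real

/-- The upper half-plane, as a subset of `ℂ`. -/
def UHP : Set ℂ := {z : ℂ | 0 < z.im}

/-- `e(z) = exp(2πiz)`. -/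
def e (z : ℂ) : ℂ := Complex.exp (2 * (π : ℂ) * I * z)

/-- The Wirtinger derivative `∂f/∂τ = (1/2)(∂f/∂x − i ∂f/∂y)`. -/
def dtau (f : ℂ → ℂ) (z : ℂ) : ℂ := (fderiv ℝ f z 1 - I * fderiv ℝ f z I) / 2

/-- The raising operator `R_w f = (1/(2πi)) (∂f/∂τ + w f/(τ − τ̄))`. -/
def Rop (w : ℤ) (f : ℂ → ℂ) : ℂ → ℂ :=
  fun z => (1 / (2 * (π : ℂ) * I)) * (dtau f z + (w : ℂ) * f z / (z - (starRingEnd ℂ) z))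

/-- Iterated raising operator: `R_w^0 = id`, `R_w^{n+1} = R_{w+2n} ∘ R_w^n`. -/
def Riter (w : ℤ) : ℕ → (ℂ → ℂ) → (ℂ → ℂ)
  | 0 => fun f => f
  | n + 1 => fun f => Rop (w + 2 * n) (Riter w n f)

/-- Normalized derivative `f^{(r)} = (2πi)^{−r} d^r f/dτ^r`. -/
def fder (r : ℕ) (f : ℂ → ℂ) : ℂ → ℂ :=
  fun z => ((2 * (π : ℂ) * I) ^ r)⁻¹ * iteratedDeriv r f z

/-- The Rankin–Cohen bracket of `f` and `g` with weight parameters `k`, `l`: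
`[f,g]_r = Σ_{s=0}^r (−1)^s C(k+r−1,s) C(l+r−1,r−s) f^{(r−s)} g^{(s)}`. -/
def RCbracket (k l r : ℕ) (f g : ℂ → ℂ) : ℂ → ℂ :=
  fun z => ∑ s ∈ Finset.range (r + 1),
    (-1 : ℂ) ^ s * (Nat.choose (k + r - 1) s : ℂ) * (Nat.choose (l + r - 1) (r - s) : ℂ) *
      fder (r - s) f z * fder s g z

open Polynomial Filter Topology

theorem dtau_eq_of_hasFDerivAt {f : ℂ → ℂ} {L : ℂ →L[ℝ] ℂ} {z : ℂ} (h : HasFDerivAt f L z) :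
    dtau f z = (L 1 - I * L I) / 2 := by
  rw [dtau, h.fderiv]

theorem Filter.EventuallyEq.dtau_eq {f g : ℂ → ℂ} {z : ℂ} (h : f =ᶠ[𝓝 z] g) :
    dtau f z = dtau g z := by
  simp only [dtau, h.fderiv_eq]

theorem Filter.EventuallyEq.Rop_eq {f g : ℂ → ℂ} {z : ℂ} (h : f =ᶠ[𝓝 z] g) (w : ℤ) :
    Rop w f z = Rop w g z := by
  simp only [Rop, h.dtau_eq, h.eq_of_nhds]

theorem dtau_mul {f g : ℂ → ℂ} {z : ℂ} (hf : DifferentiableAt ℝ f z)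
    (hg : DifferentiableAt ℝ g z) :
    dtau (fun w => f w * g w) z = dtau f z * g z + f z * dtau g z := by
  rw [dtau_eq_of_hasFDerivAt (f := fun w => f w * g w) (hf.hasFDerivAt.mul hg.hasFDerivAt),
    dtau, dtau]
  simp only [FunLike.coe_add, Pi.add_apply, FunLike.coe_smul, Pi.smul_apply, smul_eq_mul]
  ring

theorem HasDerivAt.dtau_comp {g h : ℂ → ℂ} {g' z : ℂ} (hg : HasDerivAt g g' (h z))
    (hh : DifferentiableAt ℝ h z) :
    dtau (fun w => g (h w)) z = g' * dtau h z := by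
  rw [dtau_eq_of_hasFDerivAt (f := fun w => g (h w))
    ((hg.hasFDerivAt.restrictScalars ℝ).comp z hh.hasFDerivAt), dtau]
  simp only [ContinuousLinearMap.comp_apply, ContinuousLinearMap.coe_restrictScalars',
    ContinuousLinearMap.toSpanSingleton_apply, smul_eq_mul]
  ring

theorem dtau_id (z : ℂ) : dtau (fun w => w) z = 1 := by
  rw [dtau_eq_of_hasFDerivAt (f := fun w => w) (hasFDerivAt_id z)]
  simp only [ContinuousLinearMap.id_apply, I_mul_I]
  ring

theorem HasDerivAt.dtau_eq {g : ℂ → ℂ} {g' z : ℂ} (hg : HasDerivAt g g' z) : dtau g z = g' := by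
  simpa [dtau_id] using hg.dtau_comp (h := fun w => w) differentiableAt_id

theorem dtau_ofReal_im (z : ℂ) : dtau (fun w => (w.im : ℂ)) z = -I / 2 := by
  rw [dtau_eq_of_hasFDerivAt (f := fun w => (w.im : ℂ)) (ofRealCLM.comp imCLM).hasFDerivAt]
  simp

theorem hasDerivAt_e_mul (c z : ℂ) :
    HasDerivAt (fun w => e (c * w)) (2 * π * I * c * e (c * z)) z := by
  have hexp : (fun w => e (c * w)) = fun w => cexp (2 * π * I * c * w) :=
    funext fun w => by unfold e; ring_nf
  rw [hexp]
  refine ((hasDerivAt_id z).const_mul (2 * π * I * c)).cexp.congr_deriv ?_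
  unfold e
  simp only [id, mul_one]
  ring_nf

def invFourPiIm (z : ℂ) : ℂ := (4 * (π : ℂ) * (z.im : ℂ))⁻¹

theorem hasDerivAt_eval_inv_four_pi_mul (P : ℂ[X]) {y : ℂ} (hy : y ≠ 0) :
    HasDerivAt (fun x : ℂ => P.eval (4 * π * x)⁻¹)
      (-4 * π * (4 * π * y)⁻¹ ^ 2 * (derivative P).eval (4 * π * y)⁻¹) y := by
  have h4π : (4 * π * y : ℂ) ≠ 0 := by simp [hy, Real.pi_ne_zero]
  refine ((P.hasDerivAt _).comp y ((hasDerivAt_inv h4π).comp y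
    ((hasDerivAt_id y).const_mul (4 * π : ℂ)))).congr_deriv ?_
  simp only [Function.comp_apply, mul_one, inv_pow]
  ring

theorem dtau_eval_invFourPiIm (P : ℂ[X]) {z : ℂ} (hz : z.im ≠ 0) :
    dtau (fun w => P.eval (invFourPiIm w)) z
      = 2 * π * I * invFourPiIm z ^ 2 * (derivative P).eval (invFourPiIm z) := by
  unfold invFourPiIm
  rw [(hasDerivAt_eval_inv_four_pi_mul P (ofReal_ne_zero.2 hz)).dtau_comp
    (h := fun w => (w.im : ℂ)) (ofRealCLM.comp imCLM).differentiableAt, dtau_ofReal_im]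
  ring_nf

theorem differentiableAt_eval_invFourPiIm (P : ℂ[X]) {z : ℂ} (hz : z.im ≠ 0) :
    DifferentiableAt ℝ (fun w => P.eval (invFourPiIm w)) z :=
  show DifferentiableAt ℝ ((fun x : ℂ => P.eval (4 * π * x)⁻¹) ∘ (ofRealCLM.comp imCLM)) z from
    ((hasDerivAt_eval_inv_four_pi_mul P (ofReal_ne_zero.2 hz)).differentiableAt.restrictScalars
      ℝ).comp z (ofRealCLM.comp imCLM).differentiableAt

def raisePoly (c : ℂ) (w : ℤ) (P : ℂ[X]) : ℂ[X] :=
  C c * P + X * (X * derivative P - C (w : ℂ) * P)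

theorem Rop_e_mul_eval_invFourPiIm (c : ℂ) (w : ℤ) (P : ℂ[X]) {τ : ℂ} (hτ : τ.im ≠ 0) :
    Rop w (fun z => e (c * z) * P.eval (invFourPiIm z)) τ
      = e (c * τ) * (raisePoly c w P).eval (invFourPiIm τ) := by
  rw [Rop, dtau_mul ((hasDerivAt_e_mul c τ).differentiableAt.restrictScalars ℝ)
    (differentiableAt_eval_invFourPiIm P hτ), (hasDerivAt_e_mul c τ).dtau_eq,
    dtau_eval_invFourPiIm P hτ, sub_conj]
  simp only [raisePoly, eval_add, eval_mul, eval_C, eval_X, eval_sub, invFourPiIm]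
  push_cast
  field_simp
  ring_nf
  rw [I_sq]
  ring

def raisePolyIter (c : ℂ) (w : ℤ) : ℕ → ℂ[X]
  | 0 => 1
  | m + 1 => raisePoly c (w + 2 * m) (raisePolyIter c w m)

theorem Riter_e_mul (c : ℂ) (w : ℤ) (m : ℕ) {τ : ℂ} (hτ : τ.im ≠ 0) :
    Riter w m (fun z => e (c * z)) τ
      = e (c * τ) * (raisePolyIter c w m).eval (invFourPiIm τ) := by
  induction m generalizing τ with
  | zero => simp [Riter, raisePolyIter]
  | succ m ih =>
    have hnhds : {z : ℂ | z.im ≠ 0} ∈ 𝓝 τ :=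
      (isOpen_ne_fun continuous_im continuous_const).mem_nhds hτ
    calc Riter w (m + 1) (fun z => e (c * z)) τ
        = Rop (w + 2 * m) (fun z => e (c * z) * (raisePolyIter c w m).eval (invFourPiIm z)) τ :=
          (eventuallyEq_of_mem hnhds fun z hz => ih hz).Rop_eq _
      _ = _ := Rop_e_mul_eval_invFourPiIm c _ _ hτ

section Coefficients

variable (c : ℂ) (w : ℤ) (P : ℂ[X])

theorem coeff_raisePoly_zero : (raisePoly c w P).coeff 0 = c * P.coeff 0 := by
  simp [raisePoly]

theorem coeff_raisePoly_succ (r : ℕ) :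
    (raisePoly c w P).coeff (r + 1) = c * P.coeff (r + 1) + (r - w) * P.coeff r := by
  rcases r with _ | r
  · simp [raisePoly]
  · simp only [raisePoly, map_intCast, coeff_add, coeff_C_mul, coeff_X_mul, coeff_sub,
      coeff_derivative, coeff_intCast_mul, Nat.cast_add, Nat.cast_one, add_right_inj]
    ring

end Coefficients

theorem choose_succ_succ_mul_eq {R : Type*} [CommRing R] (m r : ℕ) (a : R) :
    ((m + 1).choose (r + 1) : R) * a
      = m.choose (r + 1) * (a + r + 1) + m.choose r * (a + r - m) := by
  have hrec : ((m.choose (r + 1) : ℕ) : R) * (r + 1) = m.choose r * (m - r) := by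
    rcases le_or_gt r m with hrm | hmr
    · have h := congrArg (Nat.cast (R := R)) (Nat.choose_succ_right_eq m r)
      push_cast [Nat.cast_sub hrm] at h
      exact h
    · simp [Nat.choose_eq_zero_of_lt hmr,
        Nat.choose_eq_zero_of_lt (hmr.trans (Nat.lt_succ_self r))]
  rw [Nat.choose_succ_succ', Nat.cast_add]
  linear_combination -hrec

theorem coeff_raisePolyIter (c : ℂ) (w : ℤ) (m r : ℕ) :
    (raisePolyIter c w m).coeff r
      = m.choose r * c ^ (m - r) * (ascPochhammer ℂ r).eval (1 - w - m : ℂ) := by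
  induction m generalizing r with
  | zero => cases r <;> simp [raisePolyIter, coeff_one]
  | succ m ih =>
    rcases r with _ | r
    · simp [raisePolyIter, coeff_raisePoly_zero, ih, pow_succ']
    · obtain ⟨a, ha⟩ : ∃ a : ℂ, -(w : ℂ) - m = a := ⟨_, rfl⟩
      have hpow :
          c * c ^ (m - (r + 1)) * (m.choose (r + 1) : ℂ) = c ^ (m - r) * m.choose (r + 1) := by
        rcases lt_or_ge r m with hrm | hmr
        · rw [← pow_succ', Nat.sub_add_eq, Nat.sub_add_cancel (Nat.sub_pos_of_lt hrm)]
        · simp [Nat.choose_eq_zero_of_lt (Nat.lt_succ_of_le hmr)]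
      have hleft : (ascPochhammer ℂ (r + 1)).eval a = a * (ascPochhammer ℂ r).eval (a + 1) := by
        simp [ascPochhammer_succ_left]
      rw [raisePolyIter, coeff_raisePoly_succ, ih, ih, Nat.add_sub_add_right,
        ascPochhammer_succ_eval, show (1 - w - ↑(m + 1) : ℂ) = a by rw [← ha]; push_cast; ring,
        hleft, show (1 - w - m : ℂ) = a + 1 by rw [← ha]; ring,
        show (r - ((w + 2 * m : ℤ) : ℂ)) = a + r - m by rw [← ha]; push_cast; ring]
      linear_combination
        -(c ^ (m - r) * (ascPochhammer ℂ r).eval (a + 1)) * choose_succ_succ_mul_eq m r a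
          + (ascPochhammer ℂ r).eval (a + 1) * (a + 1 + r) * hpow

theorem natDegree_raisePolyIter_le (c : ℂ) (w : ℤ) (m : ℕ) :
    (raisePolyIter c w m).natDegree ≤ m :=
  natDegree_le_iff_coeff_eq_zero.2 fun r hr => by
    rw [coeff_raisePolyIter, Nat.choose_eq_zero_of_lt hr, Nat.cast_zero, zero_mul, zero_mul]

theorem choose_mul_ascFactorial_eq {K : Type*} [Field K] [CharZero K] {r k : ℕ} (hrk : r ≤ k) :
    (k.choose r : K) * ((k + 1).ascFactorial r : K)
      = ((k + r).factorial : K) / ((r.factorial : K) * ((k - r).factorial : K)) := by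
  have hfac := Nat.factorial_mul_ascFactorial k r
  rw [← Nat.choose_mul_factorial_mul_factorial hrk] at hfac
  rw [eq_div_iff (by simp [Nat.factorial_ne_zero])]
  exact_mod_cast (by rw [← hfac]; ring :
    k.choose r * (k + 1).ascFactorial r * (r.factorial * (k - r).factorial) = (k + r).factorial)

theorem stmt7 (k n : ℕ) :
    ∀ τ ∈ UHP,
      Riter (-(2 * (k : ℤ))) k (fun z => e ((n : ℂ) * z)) τ
        = e ((n : ℂ) * τ) *
            ∑ r ∈ Finset.range (k + 1),
              (((k + r).factorial : ℂ) / ((r.factorial : ℂ) * ((k - r).factorial : ℂ))) *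
                (n : ℂ) ^ (k - r) * (4 * (π : ℂ) * (τ.im : ℂ)) ^ (-(r : ℤ)) := by
  intro τ hτ
  rw [Riter_e_mul _ _ _ (ne_of_gt hτ),
    eval_eq_sum_range' (Nat.lt_succ_of_le (natDegree_raisePolyIter_le _ _ _))]
  refine congrArg _ (Finset.sum_congr rfl fun r hr => ?_)
  have hrk : r ≤ k := Nat.lt_succ_iff.1 (Finset.mem_range.1 hr)
  rw [coeff_raisePolyIter,
    show (1 - ((-(2 * k) : ℤ) : ℂ) - k) = ((k + 1 : ℕ) : ℂ) by push_cast; ring,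
    ascPochhammer_nat_eq_natCast_ascFactorial, ← choose_mul_ascFactorial_eq hrk, zpow_neg,
    zpow_natCast, invFourPiIm, inv_pow]
  ring
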